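/- Under the extension setup (S a based scheme on Z with closed subset T̃, based morphism i: U → S with iπ: U → S//T̃ an isomorphism, and Condition (*): |t(ui)| = 1 for all u ∈ U and t ∈ T̃), suppose u ∈ U, t ∈ T̃, and s ∈ (ui)t. Then for every t̃ ∈ T̃''_u = {t' ∈ T̃ : (ui)t' = {ui}}, the complex product st̃ equals {s}. -/
import Mathlib


/-!
Common framework for association schemes, following the paper
"A new semidirect product for association schemes".
-/

/-- The diagonal relation `1_X` on a set `X`. -/
def diagRel (X : Type) : Set (X × X) := {w | w.1 = w.2}

/-- The transpose `s*` of a relation. -/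
def transp {X : Type} (s : Set (X × X)) : Set (X × X) := Prod.swap '' s

/-- The structure constant `a_{pqr}`: for `(x,y) ∈ r`, the number of `z` with
`(x,z) ∈ p` and `(z,y) ∈ q` (well-defined for elements of a scheme). -/
noncomputable def aC {X : Type} (p q r : Set (X × X)) : ℕ :=
  sSup {n | ∃ w ∈ r, n = Nat.card {z : X // (w.1, z) ∈ p ∧ (z, w.2) ∈ q}}

/-- `S` is an association scheme on `X`. -/
def IsScheme {X : Type} (S : Set (Set (X × X))) : Prop :=
  (∀ s ∈ S, s.Nonempty) ∧
  (∀ w : X × X, ∃! s, s ∈ S ∧ w ∈ s) ∧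
  diagRel X ∈ S ∧
  (∀ s ∈ S, transp s ∈ S) ∧
  (∀ p ∈ S, ∀ q ∈ S, ∀ r ∈ S, ∀ w ∈ r,
    Nat.card {z : X // (w.1, z) ∈ p ∧ (z, w.2) ∈ q} = aC p q r)

/-- Complex product of two relations relative to a scheme `S`:
`pq = {r ∈ S : a_{pqr} > 0}`. -/
noncomputable def cmulS {X : Type} (S : Set (Set (X × X))) (p q : Set (X × X)) :
    Set (Set (X × X)) :=
  {r | r ∈ S ∧ 0 < aC p q r}

/-- Complex product of two subsets of a scheme. -/
noncomputable def setMulS {X : Type} (S : Set (Set (X × X)))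
    (Pp Qq : Set (Set (X × X))) : Set (Set (X × X)) :=
  ⋃ p ∈ Pp, ⋃ q ∈ Qq, cmulS S p q

/-- `T` is a closed subset of the scheme `S` (i.e. `T ⊆ S` and `T*T ⊆ T`). -/
def IsClosedIn {X : Type} (S T : Set (Set (X × X))) : Prop :=
  T ⊆ S ∧ ∀ p ∈ T, ∀ q ∈ T, cmulS S (transp p) q ⊆ T

/-- `T` is a normal subset of the scheme `S` (i.e. `pT = Tp` for all `p ∈ S`). -/
noncomputable def IsNormalIn {X : Type} (S T : Set (Set (X × X))) : Prop :=
  ∀ p ∈ S, setMulS S {p} T = setMulS S T {p}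

/-- `xs = {y : (x,y) ∈ s}`. -/
def pimg {X : Type} (s : Set (X × X)) (x : X) : Set X := {y | (x, y) ∈ s}

/-- The coset `xT` of a (closed) subset `T` of a scheme. -/
def coset {X : Type} (T : Set (Set (X × X))) (x : X) : Set X :=
  {y | ∃ t ∈ T, (x, y) ∈ t}

/-- The set `X/T` of cosets. -/
def cosets {X : Type} (T : Set (Set (X × X))) : Set (Set X) :=
  {C | ∃ x, C = coset T x}

/-- The quotient relation `s^T` on cosets. -/
def quotRel {X : Type} (T : Set (Set (X × X))) (s : Set (X × X)) :
    Set (Set X × Set X) :=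
  {w | ∃ x₁ x₂, w = (coset T x₁, coset T x₂) ∧
    ∃ p ∈ s, p.1 ∈ coset T x₁ ∧ p.2 ∈ coset T x₂}

/-- The relations of the quotient scheme `S//T`. -/
def quotS {X : Type} (S T : Set (Set (X × X))) : Set (Set (Set X × Set X)) :=
  {r | ∃ s ∈ S, r = quotRel T s}

/-- A presentation of a (based) scheme: a set of points inside an ambient type,
a set of relations, and a basepoint. -/
structure Pres (P : Type) where
  pts : Set P
  rels : Set (Set (P × P))
  base : P

/-- A scheme `S` on the whole of `X`, based at `x0`, as a presentation. -/
def fullPres {X : Type} (S : Set (Set (X × X))) (x0 : X) : Pres X :=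
  ⟨Set.univ, S, x0⟩

/-- The quotient scheme `S//T` on `X/T`, based at `x0 T`, as a presentation. -/
def quotPres {X : Type} (S T : Set (Set (X × X))) (x0 : X) : Pres (Set X) :=
  ⟨cosets T, quotS S T, coset T x0⟩

/-- The subscheme of a scheme defined by the coset `xT` of a closed subset `T`,
as a presentation. -/
def subPres {X : Type} (T : Set (Set (X × X))) (x : X) : Pres X :=
  ⟨coset T x, {r | ∃ t ∈ T, r = t ∩ (coset T x ×ˢ coset T x)}, x⟩

/-- `f` is a morphism of schemes between two presentations: it maps points to
points, and pairs lying in the same relation to pairs lying in the same relation. -/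
def IsMorOn {P Q : Type} (A : Pres P) (B : Pres Q) (f : P → Q) : Prop :=
  Set.MapsTo f A.pts B.pts ∧
  ∀ s ∈ A.rels, ∀ w ∈ s, ∀ w' ∈ s,
    ∃ t ∈ B.rels, (f w.1, f w.2) ∈ t ∧ (f w'.1, f w'.2) ∈ t

/-- The induced map on scheme elements sends `s` to `t` (i.e. `s φ_S = t`):
every pair of `s` is mapped into `t`. -/
def elemMapsTo {P Q : Type} (f : P → Q) (s : Set (P × P)) (t : Set (Q × Q)) : Prop :=
  ∀ w ∈ s, (f w.1, f w.2) ∈ t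

/-- `f` is an isomorphism of schemes: a morphism which is bijective on points and
whose induced map on scheme elements is bijective. -/
def IsIsoOn {P Q : Type} (A : Pres P) (B : Pres Q) (f : P → Q) : Prop :=
  IsMorOn A B f ∧ Set.BijOn f A.pts B.pts ∧
  ∀ t ∈ B.rels, ∃! s, s ∈ A.rels ∧ elemMapsTo f s t

/-- A based isomorphism of schemes. -/
def IsBasedIsoOn {P Q : Type} (A : Pres P) (B : Pres Q) (f : P → Q) : Prop :=
  IsIsoOn A B f ∧ f A.base = B.base

/-- A based association scheme on a finite based set. -/
structure BScheme : Type 1 where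
  X : Type
  fin : Fintype X
  base : X
  S : Set (Set (X × X))
  isScheme : IsScheme S

/-- A morphism in the category 𝒞: a normal closed subset on each side together
with a based isomorphism between the corresponding quotient schemes. -/
structure HomC (A B : BScheme) where
  TN : Set (Set (A.X × A.X))
  UN : Set (Set (B.X × B.X))
  TN_cl : IsClosedIn A.S TN
  TN_n : IsNormalIn A.S TN
  UN_cl : IsClosedIn B.S UN
  UN_n : IsNormalIn B.S UN
  f : Set A.X → Set B.X
  iso : IsBasedIsoOn (quotPres A.S TN A.base) (quotPres B.S UN B.base) f

/-- `t^{T_φ} φ̃ = u^{U_φ}`: the induced map on quotient scheme elements sends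
the class of `t` to the class of `u`. -/
def elemRel {A B : BScheme} (φ : HomC A B) (t : Set (A.X × A.X))
    (u : Set (B.X × B.X)) : Prop :=
  elemMapsTo φ.f (quotRel φ.TN t) (quotRel φ.UN u)

/-- The normal closed subset `T_{φψ}` of the composite. -/
def Tcomp {A B C : BScheme} (φ : HomC A B) (ψ : HomC B C) :
    Set (Set (A.X × A.X)) :=
  {t | t ∈ A.S ∧ ∃ u ∈ B.S, elemRel φ t u ∧ elemRel ψ u (diagRel C.X)}

/-- The normal closed subset `V_{φψ}` of the composite. -/
def Vcomp {A B C : BScheme} (φ : HomC A B) (ψ : HomC B C) :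
    Set (Set (C.X × C.X)) :=
  {v | v ∈ C.S ∧ ∃ u ∈ B.S, elemRel φ (diagRel A.X) u ∧ elemRel ψ u v}

/-- `ρ` is a composite of `φ` and `ψ` in the category 𝒞. -/
def IsComposite {A B C : BScheme} (φ : HomC A B) (ψ : HomC B C) (ρ : HomC A C) : Prop :=
  ρ.TN = Tcomp φ ψ ∧ ρ.UN = Vcomp φ ψ ∧
  ∀ (x : A.X) (y : B.X) (z : C.X),
    φ.f (coset φ.TN x) = coset φ.UN y →
    ψ.f (coset ψ.TN y) = coset ψ.UN z →
    ρ.f (coset (Tcomp φ ψ) x) = coset (Vcomp φ ψ) z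

/-- The identity morphism of 𝒞 at `A`: both normal closed subsets are `{1_X}`
and the isomorphism is the identity of `A//{1_X}`. -/
def IsIdHom {A : BScheme} (ι : HomC A A) : Prop :=
  ι.TN = {diagRel A.X} ∧ ι.UN = {diagRel A.X} ∧
  ∀ x : A.X, ι.f (coset {diagRel A.X} x) = coset {diagRel A.X} x

/-- A `τ_T`-scheme on the based set underlying `T`. -/
structure TauSchemeOn (T : BScheme) where
  rels : Set (Set (T.X × T.X))
  isScheme : IsScheme rels
  alpha : Set (T.X × T.X) → Set (T.X × T.X)
  alpha_bij : Set.BijOn alpha T.S rels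
  alpha_one : alpha (diagRel T.X) = diagRel T.X
  alpha_star : ∀ p ∈ T.S, alpha (transp p) = transp (alpha p)
  alpha_const : ∀ p ∈ T.S, ∀ q ∈ T.S, ∀ r ∈ T.S,
    aC p q r = aC (alpha p) (alpha q) (alpha r)

/-- The based scheme underlying a `τ`-scheme. -/
abbrev TauSchemeOn.toB {T : BScheme} (Z : TauSchemeOn T) : BScheme :=
  ⟨T.X, T.fin, T.base, Z.rels, Z.isScheme⟩

/-- An action `ζ` of a based scheme `U` on a based scheme `T`. -/
structure SchemeAction (U T : BScheme) where
  /-- the `τ`-scheme `ζ_y = (T_y, α^y)` for each `y ∈ Y` -/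
  Z : U.X → TauSchemeOn T
  /-- the morphism `ζ_{y₁}^{y₂} ∈ Hom_𝒞(T_{y₁}, T_{y₂})` -/
  hom : ∀ y1 y2 : U.X, HomC (Z y1).toB (Z y2).toB
  /-- (1) `T_{y*} = T` -/
  base_rels : (Z U.base).rels = T.S
  /-- (1) `α^{y*} = id` -/
  base_alpha : ∀ p, (Z U.base).alpha p = p
  /-- (2) `ζ_y^y` is the identity morphism -/
  hom_refl_TN : ∀ y : U.X, (hom y y).TN = {diagRel T.X}
  hom_refl_UN : ∀ y : U.X, (hom y y).UN = {diagRel T.X}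
  hom_refl_f : ∀ (y : U.X) (x : T.X),
    (hom y y).f (coset {diagRel T.X} x) = coset {diagRel T.X} x
  /-- (3) `ζ_{y₂}^{y₁} = (ζ_{y₁}^{y₂})*` -/
  hom_symm_TN : ∀ y1 y2 : U.X, (hom y2 y1).TN = (hom y1 y2).UN
  hom_symm_UN : ∀ y1 y2 : U.X, (hom y2 y1).UN = (hom y1 y2).TN
  hom_symm_f : ∀ y1 y2 : U.X,
    Set.InvOn (hom y2 y1).f (hom y1 y2).f
      (cosets (hom y1 y2).TN) (cosets (hom y1 y2).UN)
  /-- (4) `ζ_{y₁}^{y₂}(τ)` depends only on the element `u ∈ U` containing `(y₁,y₂)` -/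
  zeta_welldef : ∀ u ∈ U.S, ∀ y1 y2 y1' y2' : U.X, (y1, y2) ∈ u → (y1', y2') ∈ u →
    ∀ Pp : Set (Set (T.X × T.X)),
      {u' | u' ∈ T.S ∧ ∃ t ∈ Pp,
        elemRel (hom y1 y2) ((Z y1).alpha t) ((Z y2).alpha u')} =
      {u' | u' ∈ T.S ∧ ∃ t ∈ Pp,
        elemRel (hom y1' y2') ((Z y1').alpha t) ((Z y2').alpha u')}
  /-- (5) `ζ_{y₁}^{y₃} ≤ ζ_{y₁}^{y₂} ζ_{y₂}^{y₃}` -/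
  le_comp : ∀ y1 y2 y3 : U.X,
    (hom y1 y3).TN ⊆ Tcomp (hom y1 y2) (hom y2 y3) ∧
    (hom y1 y3).UN ⊆ Vcomp (hom y1 y2) (hom y2 y3) ∧
    ∀ x x2 x3 : T.X,
      (hom y1 y2).f (coset (hom y1 y2).TN x) = coset (hom y1 y2).UN x2 →
      (hom y2 y3).f (coset (hom y2 y3).TN x2) = coset (hom y2 y3).UN x3 →
      (hom y1 y3).f (coset (hom y1 y3).TN x) ⊆
        coset (Vcomp (hom y1 y2) (hom y2 y3)) x3

/-- The map `ζ_u` on subsets of `τ` induced by any `(y₁,y₂) ∈ u`. -/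
def SchemeAction.zetaU {U T : BScheme} (act : SchemeAction U T)
    (u : Set (U.X × U.X)) (Pp : Set (Set (T.X × T.X))) : Set (Set (T.X × T.X)) :=
  {u' | ∃ y1 y2 : U.X, (y1, y2) ∈ u ∧ u' ∈ T.S ∧
    ∃ t ∈ Pp, elemRel (act.hom y1 y2) ((act.Z y1).alpha t) ((act.Z y2).alpha u')}

/-- The relation `[u,t]` on `Y × X`. -/
def SchemeAction.rel {U T : BScheme} (act : SchemeAction U T)
    (u : Set (U.X × U.X)) (t : Set (T.X × T.X)) :
    Set ((U.X × T.X) × (U.X × T.X)) :=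
  {w | (w.1.1, w.2.1) ∈ u ∧
    ((act.hom w.1.1 w.2.1).f (coset (act.hom w.1.1 w.2.1).TN w.1.2),
      coset (act.hom w.1.1 w.2.1).UN w.2.2) ∈
      quotRel (act.hom w.1.1 w.2.1).UN ((act.Z w.2.1).alpha t)}

/-- The semidirect product `U ⋉_ζ T` as a set of relations on `Y × X`. -/
def SchemeAction.sdp {U T : BScheme} (act : SchemeAction U T) :
    Set (Set ((U.X × T.X) × (U.X × T.X))) :=
  {r | ∃ u ∈ U.S, ∃ t ∈ T.S, r = act.rel u t}

/-- The valency `n_s = a_{s s* 1}` of a relation. -/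
noncomputable def nval {X : Type} (s : Set (X × X)) : ℕ :=
  aC s (transp s) (diagRel X)


set_option linter.unusedSectionVars false

section AuxSchemeLemmas

variable {X : Type} [Fintype X]

lemma transp_transp' (s : Set (X × X)) : transp (transp s) = s := by
  simp only [transp, Set.image_image, Prod.swap_swap, Set.image_id']

lemma mem_transp' {s : Set (X × X)} {a b : X} : (a, b) ∈ transp s ↔ (b, a) ∈ s := by
  constructor
  · rintro ⟨w, hw, h⟩
    have hw' : w = (b, a) := by
      have h2 := congrArg Prod.swap h
      rwa [Prod.swap_swap] at h2
    rwa [hw'] at hw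
  · intro h
    exact ⟨(b, a), h, rfl⟩

lemma elt_exists' {S : Set (Set (X × X))} (hS : IsScheme S) (w : X × X) :
    ∃ s, s ∈ S ∧ w ∈ s := (hS.2.1 w).exists

lemma aC_pos' {S : Set (Set (X × X))} (hS : IsScheme S) {p q r : Set (X × X)}
    (hp : p ∈ S) (hq : q ∈ S) (hr : r ∈ S) {x z : X} (hxz : (x, z) ∈ r)
    {y : X} (h1 : (x, y) ∈ p) (h2 : (y, z) ∈ q) : 0 < aC p q r := by
  have hcard := hS.2.2.2.2 p hp q hq r hr (x, z) hxz
  rw [← hcard]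
  haveI : Nonempty {m : X // ((x, z).1, m) ∈ p ∧ (m, (x, z).2) ∈ q} := ⟨⟨y, h1, h2⟩⟩
  exact Nat.card_pos

lemma aC_decompose' {S : Set (Set (X × X))} (hS : IsScheme S) {p q r : Set (X × X)}
    (hp : p ∈ S) (hq : q ∈ S) (hr : r ∈ S) (hpos : 0 < aC p q r)
    {x z : X} (hxz : (x, z) ∈ r) : ∃ y, (x, y) ∈ p ∧ (y, z) ∈ q := by
  have hcard := hS.2.2.2.2 p hp q hq r hr (x, z) hxz
  rw [← hcard] at hpos
  obtain ⟨⟨y, hy⟩⟩ := (Nat.card_pos_iff.mp hpos).1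
  exact ⟨y, hy⟩

lemma mem_cmulS' {S : Set (Set (X × X))} (hS : IsScheme S) {p q r : Set (X × X)}
    (hp : p ∈ S) (hq : q ∈ S) (hr : r ∈ S) {x z : X} (hxz : (x, z) ∈ r)
    {y : X} (h1 : (x, y) ∈ p) (h2 : (y, z) ∈ q) : r ∈ cmulS S p q :=
  ⟨hr, aC_pos' hS hp hq hr hxz h1 h2⟩

lemma cmulS_decompose' {S : Set (Set (X × X))} (hS : IsScheme S) {p q r : Set (X × X)}
    (hp : p ∈ S) (hq : q ∈ S) (hr : r ∈ cmulS S p q) {x z : X} (hxz : (x, z) ∈ r) :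
    ∃ y, (x, y) ∈ p ∧ (y, z) ∈ q :=
  aC_decompose' hS hp hq hr.1 hr.2 hxz

lemma out_total' {S : Set (Set (X × X))} (hS : IsScheme S) {p : Set (X × X)}
    (hp : p ∈ S) (x : X) : ∃ y, (x, y) ∈ p := by
  obtain ⟨⟨a, b⟩, hab⟩ := hS.1 p hp
  have hdiag : diagRel X ∈ S := hS.2.2.1
  have htp : transp p ∈ S := hS.2.2.2.1 p hp
  have hpos : 0 < aC p (transp p) (diagRel X) :=
    aC_pos' hS hp htp hdiag (show ((a : X), a) ∈ diagRel X from rfl) hab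
      (mem_transp'.mpr hab)
  obtain ⟨y, hy, -⟩ :=
    aC_decompose' hS hp htp hdiag hpos (show ((x : X), x) ∈ diagRel X from rfl)
  exact ⟨y, hy⟩

lemma in_total' {S : Set (Set (X × X))} (hS : IsScheme S) {p : Set (X × X)}
    (hp : p ∈ S) (y : X) : ∃ x, (x, y) ∈ p := by
  obtain ⟨⟨a, b⟩, hab⟩ := hS.1 p hp
  have hdiag : diagRel X ∈ S := hS.2.2.1
  have htp : transp p ∈ S := hS.2.2.2.1 p hp
  have hpos : 0 < aC (transp p) p (diagRel X) :=
    aC_pos' hS htp hp hdiag (show ((b : X), b) ∈ diagRel X from rfl)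
      (mem_transp'.mpr hab) hab
  obtain ⟨z, -, hz⟩ :=
    aC_decompose' hS htp hp hdiag hpos (show ((y : X), y) ∈ diagRel X from rfl)
  exact ⟨z, hz⟩

lemma diag_mem_closed' {S Tt : Set (Set (X × X))} (hS : IsScheme S)
    (hTt : IsClosedIn S Tt) {t : Set (X × X)} (ht : t ∈ Tt) : diagRel X ∈ Tt := by
  have htS : t ∈ S := hTt.1 ht
  obtain ⟨⟨a, b⟩, hab⟩ := hS.1 t htS
  apply hTt.2 t ht t ht
  exact mem_cmulS' hS (hS.2.2.2.1 t htS) htS hS.2.2.1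
    (show ((b : X), b) ∈ diagRel X from rfl) (mem_transp'.mpr hab) hab

lemma transp_mem_closed' {S Tt : Set (Set (X × X))} (hS : IsScheme S)
    (hTt : IsClosedIn S Tt) {t : Set (X × X)} (ht : t ∈ Tt) : transp t ∈ Tt := by
  have htS : t ∈ S := hTt.1 ht
  obtain ⟨⟨a, b⟩, hab⟩ := hS.1 t htS
  apply hTt.2 t ht (diagRel X) (diag_mem_closed' hS hTt ht)
  exact mem_cmulS' hS (hS.2.2.2.1 t htS) hS.2.2.1 (hS.2.2.2.1 t htS)
    (mem_transp'.mpr hab) (mem_transp'.mpr hab)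
    (show ((a : X), a) ∈ diagRel X from rfl)

lemma cmulS_subset_closed' {S Tt : Set (Set (X × X))} (hS : IsScheme S)
    (hTt : IsClosedIn S Tt) {t₁ t₂ : Set (X × X)} (h1 : t₁ ∈ Tt) (h2 : t₂ ∈ Tt) :
    cmulS S t₁ t₂ ⊆ Tt := by
  have h := hTt.2 (transp t₁) (transp_mem_closed' hS hTt h1) t₂ h2
  rwa [transp_transp'] at h

lemma self_mem_coset' {Tt : Set (Set (X × X))} (hdiag : diagRel X ∈ Tt) (x : X) :
    x ∈ coset Tt x := ⟨diagRel X, hdiag, rfl⟩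

lemma elt_closed_of_same_coset' {S Tt : Set (Set (X × X))} (hS : IsScheme S)
    (hTt : IsClosedIn S Tt) {ξ α β : X} (hα : α ∈ coset Tt ξ) (hβ : β ∈ coset Tt ξ)
    {e : Set (X × X)} (he : e ∈ S) (hmem : (α, β) ∈ e) : e ∈ Tt := by
  obtain ⟨t₁, ht₁, hξα⟩ := hα
  obtain ⟨t₂, ht₂, hξβ⟩ := hβ
  apply hTt.2 t₁ ht₁ t₂ ht₂
  exact mem_cmulS' hS (hS.2.2.2.1 t₁ (hTt.1 ht₁)) (hTt.1 ht₂) he hmem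
    (mem_transp'.mpr hξα) hξβ

lemma coset_eq_of_mem' {S Tt : Set (Set (X × X))} (hS : IsScheme S)
    (hTt : IsClosedIn S Tt) {x y : X} (h : y ∈ coset Tt x) :
    coset Tt y = coset Tt x := by
  obtain ⟨t₁, ht₁, hxy⟩ := h
  ext z
  constructor
  · rintro ⟨t₂, ht₂, hyz⟩
    obtain ⟨e, heS, hxz⟩ := elt_exists' hS (x, z)
    exact ⟨e, cmulS_subset_closed' hS hTt ht₁ ht₂
      (mem_cmulS' hS (hTt.1 ht₁) (hTt.1 ht₂) heS hxz hxy hyz), hxz⟩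
  · rintro ⟨t₃, ht₃, hxz⟩
    obtain ⟨e, heS, hyz⟩ := elt_exists' hS (y, z)
    exact ⟨e, hTt.2 t₁ ht₁ t₃ ht₃
      (mem_cmulS' hS (hS.2.2.2.1 t₁ (hTt.1 ht₁)) (hTt.1 ht₃) heS hyz
        (mem_transp'.mpr hxy) hxz), hyz⟩

lemma mem_quotRel_of' {Tt : Set (Set (X × X))} (σ : Set (X × X)) {x₁ x₂ p₁ p₂ : X}
    (h : (p₁, p₂) ∈ σ) (h1 : p₁ ∈ coset Tt x₁) (h2 : p₂ ∈ coset Tt x₂) :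
    (coset Tt x₁, coset Tt x₂) ∈ quotRel Tt σ :=
  ⟨x₁, x₂, rfl, (p₁, p₂), h, h1, h2⟩

lemma quotRel_subset' {S Tt : Set (Set (X × X))} (hS : IsScheme S)
    (hTt : IsClosedIn S Tt) {σ₁ σ₂ : Set (X × X)} (h1 : σ₁ ∈ S) (h2 : σ₂ ∈ S)
    {p₁ p₂ q₁ q₂ : X} (hp : (p₁, p₂) ∈ σ₁) (hq : (q₁, q₂) ∈ σ₂)
    {ta tb : Set (X × X)} (hta : ta ∈ Tt) (htb : tb ∈ Tt)
    (hqa : (q₁, p₁) ∈ ta) (hqb : (p₂, q₂) ∈ tb) :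
    quotRel Tt σ₂ ⊆ quotRel Tt σ₁ := by
  obtain ⟨ρ, hρS, hρ⟩ := elt_exists' hS (q₁, p₂)
  have hρmul : ρ ∈ cmulS S ta σ₁ := mem_cmulS' hS (hTt.1 hta) h1 hρS hρ hqa hp
  have hσ₂mul : σ₂ ∈ cmulS S ρ tb := mem_cmulS' hS hρS (hTt.1 htb) h2 hq hρ hqb
  rintro ⟨E, F⟩ ⟨e₁, e₂, heq, ⟨r₁, r₂⟩, hr, hr1, hr2⟩
  injection heq with hE hF
  subst hE; subst hF
  obtain ⟨d, hrd, hdr₂⟩ := cmulS_decompose' hS hρS (hTt.1 htb) hσ₂mul hr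
  obtain ⟨e, hre, hed⟩ := cmulS_decompose' hS (hTt.1 hta) h1 hρmul hrd
  have he' : e ∈ coset Tt e₁ := by
    have hcr : coset Tt r₁ = coset Tt e₁ := coset_eq_of_mem' hS hTt hr1
    rw [← hcr]
    exact ⟨ta, hta, hre⟩
  have hd' : d ∈ coset Tt e₂ := by
    have hc2 : coset Tt r₂ = coset Tt e₂ := coset_eq_of_mem' hS hTt hr2
    have hc3 : coset Tt r₂ = coset Tt d := coset_eq_of_mem' hS hTt ⟨tb, htb, hdr₂⟩
    rw [← hc2, hc3]
    exact self_mem_coset' (diag_mem_closed' hS hTt hta) d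
  exact mem_quotRel_of' σ₁ hed he' hd'

lemma quotRel_eq_of_overlap' {S Tt : Set (Set (X × X))} (hS : IsScheme S)
    (hTt : IsClosedIn S Tt) {σ₁ σ₂ : Set (X × X)} (h1 : σ₁ ∈ S) (h2 : σ₂ ∈ S)
    {w : Set X × Set X} (m1 : w ∈ quotRel Tt σ₁) (m2 : w ∈ quotRel Tt σ₂) :
    quotRel Tt σ₁ = quotRel Tt σ₂ := by
  obtain ⟨x₁, x₂, heq1, ⟨p₁, p₂⟩, hp, hp1, hp2⟩ := m1
  obtain ⟨x₁', x₂', heq2, ⟨q₁, q₂⟩, hq, hq1, hq2⟩ := m2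
  have heq := heq1.symm.trans heq2
  have hx1 : coset Tt x₁' = coset Tt x₁ := (congrArg Prod.fst heq).symm
  have hx2 : coset Tt x₂' = coset Tt x₂ := (congrArg Prod.snd heq).symm
  have hq1' : q₁ ∈ coset Tt x₁ := hx1 ▸ hq1
  have hq2' : q₂ ∈ coset Tt x₂ := hx2 ▸ hq2
  obtain ⟨ta, htaS, hta⟩ := elt_exists' hS (q₁, p₁)
  have htaT : ta ∈ Tt := elt_closed_of_same_coset' hS hTt hq1' hp1 htaS hta
  obtain ⟨tb, htbS, htb⟩ := elt_exists' hS (p₂, q₂)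
  have htbT : tb ∈ Tt := elt_closed_of_same_coset' hS hTt hp2 hq2' htbS htb
  obtain ⟨ta', htaS', hta'⟩ := elt_exists' hS (p₁, q₁)
  have htaT' : ta' ∈ Tt := elt_closed_of_same_coset' hS hTt hp1 hq1' htaS' hta'
  obtain ⟨tb', htbS', htb'⟩ := elt_exists' hS (q₂, p₂)
  have htbT' : tb' ∈ Tt := elt_closed_of_same_coset' hS hTt hq2' hp2 htbS' htb'
  exact Set.Subset.antisymm
    (quotRel_subset' hS hTt h2 h1 hq hp htaT' htbT' hta' htb')
    (quotRel_subset' hS hTt h1 h2 hp hq htaT htbT hta htb)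

end AuxSchemeLemmas

theorem stmt15
    (T U Sch : BScheme) (Tt : Set (Set (Sch.X × Sch.X)))
    (hTt : IsClosedIn Sch.S Tt)
    (hsub : ∃ g : Sch.X → T.X,
      IsBasedIsoOn (subPres Tt Sch.base) (fullPres T.S T.base) g)
    (i : U.X → Sch.X)
    (himor : IsMorOn (fullPres U.S U.base) (fullPres Sch.S Sch.base) i)
    (hibase : i U.base = Sch.base)
    (hipi : IsBasedIsoOn (fullPres U.S U.base) (quotPres Sch.S Tt Sch.base)
      (fun y => coset Tt (i y)))
    (iS : Set (U.X × U.X) → Set (Sch.X × Sch.X))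
    (hiS : ∀ u ∈ U.S, iS u ∈ Sch.S ∧ elemMapsTo i u (iS u))
    (hcond : ∀ u ∈ U.S, ∀ t ∈ Tt, ∃! s, s ∈ cmulS Sch.S t (iS u))
    (u : Set (U.X × U.X)) (hu : u ∈ U.S)
    (t : Set (Sch.X × Sch.X)) (ht : t ∈ Tt)
    (s : Set (Sch.X × Sch.X)) (hs : s ∈ cmulS Sch.S (iS u) t) :
    ∀ tt ∈ {t' | t' ∈ Tt ∧ cmulS Sch.S (iS u) t' = {iS u}},
      cmulS Sch.S s tt = {s} := by
  letI : Fintype Sch.X := Sch.fin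
  have hS := Sch.isScheme
  intro tt htt
  obtain ⟨httT, httmul⟩ := htt
  obtain ⟨hσS, hσmap⟩ := hiS u hu
  have htS : t ∈ Sch.S := hTt.1 ht
  have httS : tt ∈ Sch.S := hTt.1 httT
  have hsS : s ∈ Sch.S := hs.1
  have hdiagT : diagRel Sch.X ∈ Tt := diag_mem_closed' hS hTt ht
  -- quotient class of s equals that of iS u
  obtain ⟨⟨a, c⟩, hac⟩ := hS.1 s hsS
  obtain ⟨b, hab, hbc⟩ := cmulS_decompose' hS hσS htS hs hac
  have hfib : quotRel Tt s = quotRel Tt (iS u) := by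
    have hcb : coset Tt c = coset Tt b := coset_eq_of_mem' hS hTt ⟨t, ht, hbc⟩
    refine quotRel_eq_of_overlap' hS hTt hsS hσS
      (mem_quotRel_of' s hac (self_mem_coset' hdiagT a) (self_mem_coset' hdiagT c)) ?_
    exact mem_quotRel_of' (iS u) hab (self_mem_coset' hdiagT a)
      (by rw [hcb]; exact self_mem_coset' hdiagT b)
  -- a pair of s ending at an image point
  obtain ⟨x, hxn⟩ := in_total' hS hsS (i U.base)
  have hsurj : Set.SurjOn (fun y => coset Tt (i y)) Set.univ (cosets Tt) :=
    hipi.1.2.1.2.2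
  obtain ⟨y₁, -, hy₁⟩ := hsurj ⟨x, rfl⟩
  have hy₁' : coset Tt (i y₁) = coset Tt x := hy₁
  -- reflection: (y₁, U.base) ∈ u
  obtain ⟨u'', ⟨hu''S, hu''mem⟩, -⟩ := U.isScheme.2.1 (y₁, U.base)
  obtain ⟨hσ''S, hσ''map⟩ := hiS u'' hu''S
  have hpairQ : (coset Tt (i y₁), coset Tt (i U.base)) ∈ quotRel Tt (iS u) := by
    rw [hy₁', ← hfib]
    exact mem_quotRel_of' s hxn (self_mem_coset' hdiagT x)
      (self_mem_coset' hdiagT (i U.base))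
  have hpair'' : (coset Tt (i y₁), coset Tt (i U.base)) ∈ quotRel Tt (iS u'') :=
    mem_quotRel_of' (iS u'') (hσ''map (y₁, U.base) hu''mem)
      (self_mem_coset' hdiagT (i y₁)) (self_mem_coset' hdiagT (i U.base))
  have hquoteq : quotRel Tt (iS u'') = quotRel Tt (iS u) :=
    quotRel_eq_of_overlap' hS hTt hσ''S hσS hpair'' hpairQ
  obtain ⟨v, -, hvuniq⟩ := hipi.1.2.2 (quotRel Tt (iS u)) ⟨iS u, hσS, rfl⟩
  have hmapu : elemMapsTo (fun y => coset Tt (i y)) u (quotRel Tt (iS u)) := by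
    intro w hw
    exact mem_quotRel_of' (iS u) (hσmap w hw) (self_mem_coset' hdiagT (i w.1))
      (self_mem_coset' hdiagT (i w.2))
  have hmap'' : elemMapsTo (fun y => coset Tt (i y)) u'' (quotRel Tt (iS u)) := by
    rw [← hquoteq]
    intro w hw
    exact mem_quotRel_of' (iS u'') (hσ''map w hw) (self_mem_coset' hdiagT (i w.1))
      (self_mem_coset' hdiagT (i w.2))
  have hu''u : u'' = u := (hvuniq u'' ⟨hu''S, hmap''⟩).trans (hvuniq u ⟨hu, hmapu⟩).symm
  have hy₁u : (y₁, U.base) ∈ u := hu''u ▸ hu''mem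
  have himg : (i y₁, i U.base) ∈ iS u := hσmap (y₁, U.base) hy₁u
  -- s ∈ t₉ (iS u) with t₉ ∈ Tt
  have hmx : i y₁ ∈ coset Tt x := by
    rw [← hy₁']; exact self_mem_coset' hdiagT (i y₁)
  obtain ⟨t₉, ht₉S, ht₉mem⟩ := elt_exists' hS (x, i y₁)
  have ht₉T : t₉ ∈ Tt :=
    elt_closed_of_same_coset' hS hTt (self_mem_coset' hdiagT x) hmx ht₉S ht₉mem
  have hsmul : s ∈ cmulS Sch.S t₉ (iS u) :=
    mem_cmulS' hS (hTt.1 ht₉T) hσS hsS hxn ht₉mem himg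
  obtain ⟨s₀, hs₀, hs₀uniq⟩ := hcond u hu t₉ ht₉T
  have hcseq : ∀ r' ∈ cmulS Sch.S t₉ (iS u), r' = s := fun r' hr' =>
    (hs₀uniq r' hr').trans (hs₀uniq s hsmul).symm
  -- forward: any r ∈ s tt equals s
  have hforward : ∀ r ∈ cmulS Sch.S s tt, r = s := by
    intro r hr
    obtain ⟨⟨α, γ⟩, hαγ⟩ := hS.1 r hr.1
    obtain ⟨β, hαβ, hβγ⟩ := cmulS_decompose' hS hsS httS hr hαγ
    obtain ⟨μ, hαμ, hμβ⟩ := cmulS_decompose' hS (hTt.1 ht₉T) hσS hsmul hαβ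
    obtain ⟨ω, hωS, hμγ⟩ := elt_exists' hS (μ, γ)
    have hωmul : ω ∈ cmulS Sch.S (iS u) tt :=
      mem_cmulS' hS hσS httS hωS hμγ hμβ hβγ
    rw [httmul] at hωmul
    have hμγ' : (μ, γ) ∈ iS u := by
      rw [← Set.mem_singleton_iff.mp hωmul]; exact hμγ
    exact hcseq r (mem_cmulS' hS (hTt.1 ht₉T) hσS hr.1 hαγ hαμ hμγ')
  ext r
  simp only [Set.mem_singleton_iff]
  constructor
  · exact hforward r
  · intro hrs
    obtain ⟨⟨α, β⟩, hαβ⟩ := hS.1 s hsS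
    obtain ⟨γ, hβγ⟩ := out_total' hS httS β
    obtain ⟨r', hr'S, hαγ⟩ := elt_exists' hS (α, γ)
    have hmem : r' ∈ cmulS Sch.S s tt := mem_cmulS' hS hsS httS hr'S hαγ hαβ hβγ
    have hmem2 := hmem
    rw [hforward r' hmem] at hmem2
    rw [hrs]
    exact hmem2
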